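/- (Proposition 2) For every positive integer m and every two complex numbers α ≠ 0 and x, ∑_{k=1}^m C(m, k) k^α x^k = ∑_{j=1}^m C(m, j) · j! · S(α, j) · x^j (1+x)^{m−j}. -/

import Mathlib

open Finset

/-- Stirling function of the second kind with complex argument `α`:
`S(α, k) = (1/k!) ∑_{j=1}^k (-1)^{k-j} C(k, j) j^α`. -/
noncomputable def stirlingS (α : ℂ) (k : ℕ) : ℂ :=
  (1 / (Nat.factorial k : ℂ)) *
    ∑ j ∈ Finset.Icc 1 k, (-1 : ℂ) ^ (k - j) * (Nat.choose k j : ℂ) * (j : ℂ) ^ α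

/-
Both sides are polynomials in `x` whose coefficients are fixed linear combinations of the values
`k ^ α`, so it suffices to prove the identity with `k ^ α` replaced by an arbitrary `f k`.
Expanding `j! S(α, j) = ∑ᵢ (-1)^(j-i) C(j, i) i^α` and exchanging the sums, the coefficient of
`f i` is `∑_{j ≥ i} C(m, j) (-1)^(j-i) C(j, i) x^j (1+x)^(m-j) = C(m, i) x^i ((1+x) - x)^(m-i)`
by the binomial theorem.
-/

theorem factorial_mul_stirlingS (α : ℂ) (j : ℕ) :
    (j.factorial : ℂ) * stirlingS α j =
      ∑ i ∈ Icc 1 j, (-1 : ℂ) ^ (j - i) * (j.choose i : ℂ) * (i : ℂ) ^ α := by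
  rw [stirlingS, ← mul_assoc, mul_one_div_cancel (by exact_mod_cast j.factorial_ne_zero),
    one_mul]

section BinomialTransform

variable {R : Type*} [CommRing R]

theorem sum_Icc_choose_mul_neg_one_pow_mul_choose (x : R) {i m : ℕ} (hi : i ≤ m) :
    ∑ j ∈ Icc i m, (m.choose j : R) * ((-1) ^ (j - i) * (j.choose i : R)) *
        x ^ j * (1 + x) ^ (m - j) = m.choose i * x ^ i := by
  have binomial : ∑ t ∈ range (m - i + 1),
      (-x) ^ t * (1 + x) ^ (m - i - t) * ((m - i).choose t : R) = 1 := by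
    rw [← add_pow, neg_add_cancel_comm_assoc, one_pow]
  rw [← Ico_add_one_right_eq_Icc, sum_Ico_eq_sum_range, Nat.sub_add_comm hi]
  conv_rhs => rw [← mul_one (_ * _), ← binomial, mul_sum]
  refine sum_congr rfl fun t ht => ?_
  have hti : i + t ≤ m := by grind
  have hchoose : (m.choose (i + t) : R) * ((i + t).choose i : R) =
      m.choose i * (m - i).choose t := by
    rw [← Nat.cast_mul, ← Nat.cast_mul, Nat.choose_mul (Nat.le_add_right i t),
      Nat.add_sub_cancel_left]
  rw [Nat.add_sub_cancel_left, show m - (i + t) = m - i - t by omega, neg_pow, pow_add]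
  linear_combination (-1) ^ t * x ^ i * x ^ t * (1 + x) ^ (m - i - t) * hchoose

theorem sum_choose_mul_pow_eq_sum_finite_difference (f : ℕ → R) (x : R) (m : ℕ) :
    ∑ k ∈ Icc 1 m, (m.choose k : R) * f k * x ^ k =
      ∑ j ∈ Icc 1 m, (m.choose j : R) *
        (∑ i ∈ Icc 1 j, (-1) ^ (j - i) * (j.choose i : R) * f i) * x ^ j * (1 + x) ^ (m - j) := by
  calc ∑ k ∈ Icc 1 m, (m.choose k : R) * f k * x ^ k
      = ∑ i ∈ Icc 1 m, ∑ j ∈ Icc i m, f i * ((m.choose j : R) *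
          ((-1) ^ (j - i) * (j.choose i : R)) * x ^ j * (1 + x) ^ (m - j)) := by
        refine sum_congr rfl fun i hi => ?_
        rw [← mul_sum, sum_Icc_choose_mul_neg_one_pow_mul_choose x (mem_Icc.mp hi).2]
        ring
    _ = ∑ j ∈ Icc 1 m, ∑ i ∈ Icc 1 j, f i * ((m.choose j : R) *
          ((-1) ^ (j - i) * (j.choose i : R)) * x ^ j * (1 + x) ^ (m - j)) :=
        sum_comm' fun i j => by simp only [mem_Icc]; omega
    _ = _ := by
        refine sum_congr rfl fun j _ => ?_
        rw [mul_sum, sum_mul, sum_mul]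
        exact sum_congr rfl fun i _ => by ring

end BinomialTransform

theorem stmt7_general (m : ℕ) (α x : ℂ) :
    ∑ k ∈ Icc 1 m, (Nat.choose m k : ℂ) * (k : ℂ) ^ α * x ^ k =
      ∑ j ∈ Icc 1 m, (Nat.choose m j : ℂ) * (Nat.factorial j : ℂ) * stirlingS α j *
        x ^ j * (1 + x) ^ (m - j) := by
  rw [sum_choose_mul_pow_eq_sum_finite_difference (fun k : ℕ => (k : ℂ) ^ α)]
  refine sum_congr rfl fun j _ => ?_
  rw [mul_assoc (m.choose j : ℂ) (j.factorial : ℂ), factorial_mul_stirlingS]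

theorem stmt7 (m : ℕ) (hm : 0 < m) (α x : ℂ) (hα : α ≠ 0) :
    ∑ k ∈ Icc 1 m, (Nat.choose m k : ℂ) * (k : ℂ) ^ α * x ^ k =
      ∑ j ∈ Icc 1 m, (Nat.choose m j : ℂ) * (Nat.factorial j : ℂ) * stirlingS α j *
        x ^ j * (1 + x) ^ (m - j) :=
  stmt7_general m α x
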